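/- arXiv:1902.10606 — 2 statements merged into one kernel-verified Lean document; each statement's English description precedes it below -/
import Mathlib

section
/- Uniform (in dimension) energy estimate for the Galerkin system, τ-dependent version: for all real numbers τ > 0, b > 0, c > 0, A > 0, T > 0 there exists a constant C > 0, depending only on τ, b, c, A, T (in particular independent of n, K, M, and F), with the following property. For every n ∈ ℕ, every symmetric positive semidefinite n×n real matrix K, every continuous M : [0,T] → ℝ^{n×n} whose operator norm satisfies ‖M(t)‖ ≤ A for all t ∈ [0,T], every continuous F : [0,T] → ℝⁿ, and every three-times continuously differentiable solution ξ : [0,T] → ℝⁿ of the Galerkin system with ξ(0) = ξ'(0) = ξ''(0) = 0, one has for all t ∈ [0,T]: τ |ξ''(t)|² + ⟨K ξ'(t), ξ'(t)⟩ + |ξ'(t)|² ≤ C ∫₀ᵀ |F(s)|² ds. -/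
open scoped RealInnerProductSpace

set_option maxHeartbeats 2000000 in
/-- Uniform (in dimension) energy estimate for the Galerkin system, τ-dependent
version: for all `τ, b, c, A, T > 0` there is a constant `C > 0`, independent of
`n`, `K`, `M`, `F`, such that every C³ solution `ξ` of
`τ ξ''' + M(t) ξ'' + b K ξ' + c² K ξ = F(t)` with zero initial data,
with `K` symmetric positive semidefinite and `‖M(t)‖ ≤ A`, satisfies
`τ|ξ''(t)|² + ⟨K ξ'(t), ξ'(t)⟩ + |ξ'(t)|² ≤ C ∫₀ᵀ |F|²` on `[0,T]`. -/
theorem galerkin_energy_estimate_tau_dependent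
    (τ b c A T : ℝ) (hτ : 0 < τ) (hb : 0 < b) (hc : 0 < c) (hA : 0 < A)
    (hT : 0 < T) :
    ∃ C : ℝ, 0 < C ∧
      ∀ (n : ℕ)
        (K : EuclideanSpace ℝ (Fin n) →L[ℝ] EuclideanSpace ℝ (Fin n)),
        (∀ x y : EuclideanSpace ℝ (Fin n), ⟪K x, y⟫ = ⟪x, K y⟫) →
        (∀ x : EuclideanSpace ℝ (Fin n), 0 ≤ ⟪K x, x⟫) →
        ∀ (M : ℝ → (EuclideanSpace ℝ (Fin n) →L[ℝ] EuclideanSpace ℝ (Fin n))),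
        ContinuousOn M (Set.Icc 0 T) →
        (∀ t ∈ Set.Icc (0:ℝ) T, ‖M t‖ ≤ A) →
        ∀ (F : ℝ → EuclideanSpace ℝ (Fin n)),
        ContinuousOn F (Set.Icc 0 T) →
        ∀ (ξ ξ' ξ'' ξ''' : ℝ → EuclideanSpace ℝ (Fin n)),
        (∀ t ∈ Set.Icc 0 T, HasDerivWithinAt ξ (ξ' t) (Set.Icc 0 T) t) →
        (∀ t ∈ Set.Icc 0 T, HasDerivWithinAt ξ' (ξ'' t) (Set.Icc 0 T) t) →
        (∀ t ∈ Set.Icc 0 T, HasDerivWithinAt ξ'' (ξ''' t) (Set.Icc 0 T) t) →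
        ContinuousOn ξ''' (Set.Icc 0 T) →
        ξ 0 = 0 → ξ' 0 = 0 → ξ'' 0 = 0 →
        (∀ t ∈ Set.Icc 0 T,
          τ • ξ''' t + M t (ξ'' t) + b • K (ξ' t) + c ^ 2 • K (ξ t) = F t) →
        ∀ t ∈ Set.Icc (0:ℝ) T,
          τ * ‖ξ'' t‖ ^ 2 + ⟪K (ξ' t), ξ' t⟫ + ‖ξ' t‖ ^ 2
            ≤ C * ∫ s in (0:ℝ)..T, ‖F s‖ ^ 2 := by
  have hb' : b ≠ 0 := ne_of_gt hb
  have hτ' : τ ≠ 0 := ne_of_gt hτ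
  obtain ⟨β, hβdef⟩ : ∃ β : ℝ, β = c^4/b := ⟨_, rfl⟩
  have hβ0 : 0 < β := by rw [hβdef]; positivity
  obtain ⟨μ, hμdef⟩ : ∃ μ : ℝ, μ = 2*c^2/b := ⟨_, rfl⟩
  have hμ0 : 0 < μ := by rw [hμdef]; positivity
  obtain ⟨L, hLdef⟩ : ∃ L : ℝ, L = 2*(A+1)/τ + (c^2+2*β)*(4/b) + 2 + 1 := ⟨_, rfl⟩
  have hL0 : 0 < L := by rw [hLdef]; positivity
  refine ⟨(2+4/b) * Real.exp (L*T) * (1/2), by positivity, ?_⟩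
  intro n K hKsymm hKpos M hMcont hMbd F hFcont ξ ξ' ξ'' ξ''' hdξ hdξ' hdξ'' hcξ''' hξ0 hξ'0 hξ''0 hode
  -- symmetry of the K-form
  have hsymm : ∀ u v : EuclideanSpace ℝ (Fin n), ⟪K u, v⟫ = ⟪K v, u⟫ := fun u v => by
    rw [hKsymm u v, real_inner_comm]
  -- scaled Cauchy–Schwarz for the psd form
  have kcs : ∀ (x y : EuclideanSpace ℝ (Fin n)) (ν : ℝ),
      2*ν*⟪K x, y⟫ ≤ ν^2*⟪K x, x⟫ + ⟪K y, y⟫ := by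
    intro x y ν
    have h := hKpos (ν • x - y)
    have hexp : ⟪K (ν • x - y), ν • x - y⟫
        = ν^2*⟪K x, x⟫ - 2*ν*⟪K x, y⟫ + ⟪K y, y⟫ := by
      have h1 : ⟪K y, x⟫ = ⟪K x, y⟫ := hsymm y x
      simp only [map_sub, map_smul, inner_sub_left, inner_sub_right,
        real_inner_smul_left, real_inner_smul_right, h1]
      ring
    rw [hexp] at h; linarith
  -- continuity
  have hcξ : ContinuousOn ξ (Set.Icc 0 T) := fun s hs => (hdξ s hs).continuousWithinAt
  have hcξ' : ContinuousOn ξ' (Set.Icc 0 T) := fun s hs => (hdξ' s hs).continuousWithinAt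
  have hcξ'' : ContinuousOn ξ'' (Set.Icc 0 T) := fun s hs => (hdξ'' s hs).continuousWithinAt
  -- energy
  obtain ⟨E, hEdef⟩ : ∃ E : ℝ → ℝ, E = fun s => τ/2 * ⟪ξ'' s, ξ'' s⟫ + b/2 * ⟪K (ξ' s), ξ' s⟫
      + c^2 * ⟪K (ξ s), ξ' s⟫ + (2*β) * ⟪K (ξ s), ξ s⟫ + 1/2 * ⟪ξ' s, ξ' s⟫ := ⟨_, rfl⟩
  have hcE : ContinuousOn E (Set.Icc 0 T) := by
    simp only [hEdef]
    apply ContinuousOn.add; apply ContinuousOn.add; apply ContinuousOn.add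
    apply ContinuousOn.add
    · exact continuousOn_const.mul (hcξ''.inner hcξ'')
    · exact continuousOn_const.mul ((K.continuous.comp_continuousOn hcξ').inner hcξ')
    · exact continuousOn_const.mul ((K.continuous.comp_continuousOn hcξ).inner hcξ')
    · exact continuousOn_const.mul ((K.continuous.comp_continuousOn hcξ).inner hcξ)
    · exact continuousOn_const.mul (hcξ'.inner hcξ')
  -- lower bound for E
  have hQle : ∀ s ∈ Set.Icc (0:ℝ) T,
      τ/2*‖ξ'' s‖^2 + b/4*⟪K (ξ' s), ξ' s⟫ + β*⟪K (ξ s), ξ s⟫ + 1/2*‖ξ' s‖^2 ≤ E s := by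
    intro s hs
    have hkey := kcs (ξ s) (-(ξ' s)) μ
    have hneg1 : (⟪K (ξ s), -(ξ' s)⟫ : ℝ) = -⟪K (ξ s), ξ' s⟫ := by simp
    have hneg2 : (⟪K (-(ξ' s)), -(ξ' s)⟫ : ℝ) = ⟪K (ξ' s), ξ' s⟫ := by simp
    rw [hneg1, hneg2] at hkey
    have hmul := mul_le_mul_of_nonneg_left hkey (by positivity : (0:ℝ) ≤ b/4)
    have h9 : (b/4)*(2*μ*(-(⟪K (ξ s), ξ' s⟫ : ℝ))) = -(c^2*⟪K (ξ s), ξ' s⟫) := by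
      rw [hμdef]; field_simp; ring
    have h10 : (b/4)*(μ^2*(⟪K (ξ s), ξ s⟫ : ℝ) + ⟪K (ξ' s), ξ' s⟫)
        = β*⟪K (ξ s), ξ s⟫ + b/4*⟪K (ξ' s), ξ' s⟫ := by
      rw [hμdef, hβdef]; field_simp; ring
    rw [h9, h10] at hmul
    have hp := hKpos (ξ' s)
    have hr := hKpos (ξ s)
    have e1 : (⟪ξ'' s, ξ'' s⟫ : ℝ) = ‖ξ'' s‖^2 := real_inner_self_eq_norm_sq _
    have e2 : (⟪ξ' s, ξ' s⟫ : ℝ) = ‖ξ' s‖^2 := real_inner_self_eq_norm_sq _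
    simp only [hEdef, e1, e2]
    linarith
  -- integrand of the source term
  obtain ⟨g0, hg0def⟩ : ∃ g0 : ℝ → ℝ, g0 = fun u => Real.exp (-L*u) * (1/2 * ‖F u‖^2) := ⟨_, rfl⟩
  have hcg0 : ContinuousOn g0 (Set.Icc 0 T) := by
    simp only [hg0def]
    exact ((Real.continuous_exp.comp (continuous_const.mul continuous_id)).continuousOn).mul
      (continuousOn_const.mul ((hFcont.norm).pow 2))
  obtain ⟨G, hGdef⟩ : ∃ G : ℝ → ℝ, G = fun s => Real.exp (-L*s) * E s - ∫ u in (0:ℝ)..s, g0 u := ⟨_, rfl⟩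
  have hcG : ContinuousOn G (Set.Icc 0 T) := by
    simp only [hGdef]
    apply ContinuousOn.sub
    · exact ((Real.continuous_exp.comp (continuous_const.mul continuous_id)).continuousOn).mul hcE
    · have huIcc : Set.uIcc (0:ℝ) T = Set.Icc 0 T := Set.uIcc_of_le hT.le
      have := intervalIntegral.continuousOn_primitive_interval
        (f := g0) (a := (0:ℝ)) (b := T) (μ := MeasureTheory.volume) ?_
      · rwa [huIcc] at this
      · rw [huIcc]; exact hcg0.integrableOn_Icc
  -- key derivative estimate
  have key : ∀ x ∈ Set.Ioo (0:ℝ) T, ∃ d ≤ 0, HasDerivAt G d x := by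
    intro x hx
    have hxI : x ∈ Set.Icc (0:ℝ) T := Set.mem_Icc_of_Ioo hx
    have hmem : Set.Icc (0:ℝ) T ∈ nhds x := Icc_mem_nhds hx.1 hx.2
    have h1 : HasDerivAt ξ (ξ' x) x := (hdξ x hxI).hasDerivAt hmem
    have h2 : HasDerivAt ξ' (ξ'' x) x := (hdξ' x hxI).hasDerivAt hmem
    have h3 : HasDerivAt ξ'' (ξ''' x) x := (hdξ'' x hxI).hasDerivAt hmem
    have hK1 : HasDerivAt (fun s => K (ξ s)) (K (ξ' x)) x :=
      K.hasFDerivAt.comp_hasDerivAt x h1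
    have hK2 : HasDerivAt (fun s => K (ξ' s)) (K (ξ'' x)) x :=
      K.hasFDerivAt.comp_hasDerivAt x h2
    have hE1 : HasDerivAt E (
        τ/2 * ((⟪ξ'' x, ξ''' x⟫ : ℝ) + ⟪ξ''' x, ξ'' x⟫)
      + b/2 * ((⟪K (ξ' x), ξ'' x⟫ : ℝ) + ⟪K (ξ'' x), ξ' x⟫)
      + c^2 * ((⟪K (ξ x), ξ'' x⟫ : ℝ) + ⟪K (ξ' x), ξ' x⟫)
      + (2*β) * ((⟪K (ξ x), ξ' x⟫ : ℝ) + ⟪K (ξ' x), ξ x⟫)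
      + 1/2 * ((⟪ξ' x, ξ'' x⟫ : ℝ) + ⟪ξ'' x, ξ' x⟫)) x := by
      simp only [hEdef]
      exact (((((HasDerivAt.inner ℝ h3 h3).const_mul (τ/2)).add
        ((HasDerivAt.inner ℝ hK2 h2).const_mul (b/2))).add
        ((HasDerivAt.inner ℝ hK1 h2).const_mul (c^2))).add
        ((HasDerivAt.inner ℝ hK1 h1).const_mul (2*β))).add
        ((HasDerivAt.inner ℝ h2 h2).const_mul (1/2))
    -- rewrite the derivative using the ODE
    have hodex := hode x hxI
    have hip : τ*(⟪ξ''' x, ξ'' x⟫ : ℝ) + ⟪M x (ξ'' x), ξ'' x⟫ + b*⟪K (ξ' x), ξ'' x⟫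
        + c^2*⟪K (ξ x), ξ'' x⟫ = ⟪F x, ξ'' x⟫ := by
      have h' : (⟪τ • ξ''' x + M x (ξ'' x) + b • K (ξ' x) + c ^ 2 • K (ξ x), ξ'' x⟫ : ℝ)
          = ⟪F x, ξ'' x⟫ := by rw [hodex]
      simp only [inner_add_left, real_inner_smul_left] at h'
      linarith
    obtain ⟨V, hVdef⟩ : ∃ V : ℝ, V = (⟪F x, ξ'' x⟫ : ℝ) - ⟪M x (ξ'' x), ξ'' x⟫ + c^2*⟪K (ξ' x), ξ' x⟫
      + 4*β*⟪K (ξ x), ξ' x⟫ + ⟪ξ' x, ξ'' x⟫ := ⟨_, rfl⟩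
    have hDV : τ/2 * ((⟪ξ'' x, ξ''' x⟫ : ℝ) + ⟪ξ''' x, ξ'' x⟫)
      + b/2 * ((⟪K (ξ' x), ξ'' x⟫ : ℝ) + ⟪K (ξ'' x), ξ' x⟫)
      + c^2 * ((⟪K (ξ x), ξ'' x⟫ : ℝ) + ⟪K (ξ' x), ξ' x⟫)
      + (2*β) * ((⟪K (ξ x), ξ' x⟫ : ℝ) + ⟪K (ξ' x), ξ x⟫)
      + 1/2 * ((⟪ξ' x, ξ'' x⟫ : ℝ) + ⟪ξ'' x, ξ' x⟫) = V := by
      have s1 : (⟪ξ'' x, ξ''' x⟫ : ℝ) = ⟪ξ''' x, ξ'' x⟫ := real_inner_comm _ _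
      have s2 : (⟪K (ξ'' x), ξ' x⟫ : ℝ) = ⟪K (ξ' x), ξ'' x⟫ := hsymm _ _
      have s3 : (⟪K (ξ' x), ξ x⟫ : ℝ) = ⟪K (ξ x), ξ' x⟫ := hsymm _ _
      have s4 : (⟪ξ'' x, ξ' x⟫ : ℝ) = ⟪ξ' x, ξ'' x⟫ := real_inner_comm _ _
      rw [hVdef, s1, s2, s3, s4]
      linarith
    have hE2 : HasDerivAt E V x := by rw [← hDV]; exact hE1
    -- bound V
    have hp : (0:ℝ) ≤ ⟪K (ξ' x), ξ' x⟫ := hKpos _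
    have hr : (0:ℝ) ≤ ⟪K (ξ x), ξ x⟫ := hKpos _
    have ha : (0:ℝ) ≤ ‖ξ'' x‖^2 := by positivity
    have hm : (0:ℝ) ≤ ‖ξ' x‖^2 := by positivity
    have hA1 : (⟪F x, ξ'' x⟫ : ℝ) ≤ 1/2*‖F x‖^2 + 1/2*‖ξ'' x‖^2 := by
      nlinarith [real_inner_le_norm (F x) (ξ'' x), sq_nonneg (‖F x‖ - ‖ξ'' x‖)]
    have hA2 : -(⟪M x (ξ'' x), ξ'' x⟫ : ℝ) ≤ A*‖ξ'' x‖^2 := by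
      have h5 := abs_real_inner_le_norm (M x (ξ'' x)) (ξ'' x)
      have h6 : ‖M x (ξ'' x)‖ ≤ A * ‖ξ'' x‖ :=
        le_trans ((M x).le_opNorm _) (mul_le_mul_of_nonneg_right (hMbd x hxI) (norm_nonneg _))
      have h7 := neg_abs_le (⟪M x (ξ'' x), ξ'' x⟫ : ℝ)
      have h8 : ‖M x (ξ'' x)‖*‖ξ'' x‖ ≤ A*‖ξ'' x‖*‖ξ'' x‖ :=
        mul_le_mul_of_nonneg_right h6 (norm_nonneg _)
      nlinarith
    have hA3 : (⟪ξ' x, ξ'' x⟫ : ℝ) ≤ 1/2*‖ξ' x‖^2 + 1/2*‖ξ'' x‖^2 := by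
      nlinarith [real_inner_le_norm (ξ' x) (ξ'' x), sq_nonneg (‖ξ' x‖ - ‖ξ'' x‖)]
    have hA4 : 4*β*(⟪K (ξ x), ξ' x⟫ : ℝ)
        ≤ 2*β*((⟪K (ξ x), ξ x⟫ : ℝ) + ⟪K (ξ' x), ξ' x⟫) := by
      have hk := kcs (ξ x) (ξ' x) 1
      nlinarith [mul_le_mul_of_nonneg_left hk hβ0.le]
    have hQx := hQle x hxI
    -- L*Q ≥ the needed combination
    have q0p : (0:ℝ) ≤ b/4*⟪K (ξ' x), ξ' x⟫ := by positivity
    have q0r : (0:ℝ) ≤ β*⟪K (ξ x), ξ x⟫ := by positivity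
    have q0a : (0:ℝ) ≤ τ/2*‖ξ'' x‖^2 := by positivity
    have q0m : (0:ℝ) ≤ 1/2*‖ξ' x‖^2 := by positivity
    obtain ⟨Q, hQdef⟩ : ∃ Q : ℝ,
        Q = τ/2*‖ξ'' x‖^2 + b/4*⟪K (ξ' x), ξ' x⟫ + β*⟪K (ξ x), ξ x⟫ + 1/2*‖ξ' x‖^2 := ⟨_, rfl⟩
    have q1 : (A+1)*‖ξ'' x‖^2 ≤ 2*(A+1)/τ * Q := by
      have e : (A+1)*‖ξ'' x‖^2 = 2*(A+1)/τ * (τ/2*‖ξ'' x‖^2) := by field_simp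
      rw [e]
      apply mul_le_mul_of_nonneg_left _ (by positivity)
      rw [hQdef]; linarith
    have q2 : (c^2+2*β)*(⟪K (ξ' x), ξ' x⟫ : ℝ) ≤ (c^2+2*β)*(4/b) * Q := by
      have e : (c^2+2*β)*(⟪K (ξ' x), ξ' x⟫ : ℝ)
          = (c^2+2*β)*(4/b) * (b/4*⟪K (ξ' x), ξ' x⟫) := by field_simp
      rw [e]
      apply mul_le_mul_of_nonneg_left _ (by positivity)
      rw [hQdef]; linarith
    have q3 : 2*β*(⟪K (ξ x), ξ x⟫ : ℝ) ≤ 2 * Q := by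
      have e : 2*β*(⟪K (ξ x), ξ x⟫ : ℝ) = 2 * (β*⟪K (ξ x), ξ x⟫) := by ring
      rw [e]
      apply mul_le_mul_of_nonneg_left _ (by norm_num)
      rw [hQdef]; linarith
    have q4 : 1/2*‖ξ' x‖^2 ≤ 1 * Q := by rw [hQdef]; linarith
    have hLQ : (A+1)*‖ξ'' x‖^2 + (c^2+2*β)*(⟪K (ξ' x), ξ' x⟫ : ℝ)
        + 2*β*(⟪K (ξ x), ξ x⟫ : ℝ) + 1/2*‖ξ' x‖^2 ≤ L * Q := by
      rw [hLdef]; linarith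
    have hLE : L * Q ≤ L * E x := by
      rw [hQdef]; exact mul_le_mul_of_nonneg_left hQx hL0.le
    have hVle : V ≤ 1/2*‖F x‖^2 + L * E x := by
      rw [hVdef]; linarith
    -- derivative of G
    have hexp : HasDerivAt (fun s => Real.exp (-L*s)) (Real.exp (-L*x) * (-L)) x := by
      have hlin : HasDerivAt (fun s : ℝ => -L*s) (-L) x := by
        simpa using (hasDerivAt_id x).const_mul (-L)
      exact hlin.exp
    have hsub : Set.uIcc (0:ℝ) x ⊆ Set.Icc 0 T := by
      rw [Set.uIcc_of_le hx.1.le]; exact Set.Icc_subset_Icc le_rfl hx.2.le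
    have hInt : HasDerivAt (fun s => ∫ u in (0:ℝ)..s, g0 u) (g0 x) x := by
      refine intervalIntegral.integral_hasDerivAt_right
        ((hcg0.mono hsub).intervalIntegrable) ?_ ?_
      · exact ⟨Set.Icc 0 T, hmem, hcg0.aestronglyMeasurable measurableSet_Icc⟩
      · exact (hcg0 x hxI).continuousAt hmem
    have hGder : HasDerivAt G
        (Real.exp (-L*x) * (-L) * E x + Real.exp (-L*x) * V - g0 x) x := by
      simp only [hGdef]
      exact (hexp.mul hE2).sub hInt
    refine ⟨_, ?_, hGder⟩
    have hE0 : (0:ℝ) < Real.exp (-L*x) := Real.exp_pos _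
    have heq : Real.exp (-L*x) * (-L) * E x + Real.exp (-L*x) * V - g0 x
        = Real.exp (-L*x) * (V - L * E x - 1/2*‖F x‖^2) := by
      simp only [hg0def]; ring
    rw [heq]
    exact mul_nonpos_iff.mpr (Or.inl ⟨hE0.le, by linarith⟩)
  -- G is antitone
  have hGanti : AntitoneOn G (Set.Icc 0 T) := by
    apply antitoneOn_of_deriv_nonpos (convex_Icc 0 T) hcG
    · intro x hx
      rw [interior_Icc] at hx
      obtain ⟨d, _, hd⟩ := key x hx
      exact hd.differentiableAt.differentiableWithinAt
    · intro x hx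
      rw [interior_Icc] at hx
      obtain ⟨d, hd0, hd⟩ := key x hx
      rw [hd.deriv]; exact hd0
  have hG0 : G 0 = 0 := by
    simp only [hGdef, hEdef, intervalIntegral.integral_same, sub_zero]
    simp [hξ0, hξ'0, hξ''0]
  -- main estimate on E
  have hImain : ∀ t ∈ Set.Icc (0:ℝ) T,
      E t ≤ Real.exp (L*T) * ∫ s in (0:ℝ)..T, 1/2*‖F s‖^2 := by
    intro t ht
    have h1 : G t ≤ 0 := by
      have := hGanti (Set.left_mem_Icc.mpr hT.le) ht ht.1
      rwa [hG0] at this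
    have h2 : Real.exp (-L*t) * E t - ∫ u in (0:ℝ)..t, g0 u ≤ 0 := by
      simp only [hGdef] at h1; exact h1
    have hhalfcont : ContinuousOn (fun u => 1/2*‖F u‖^2) (Set.Icc 0 T) :=
      continuousOn_const.mul ((hFcont.norm).pow 2)
    have hsub1 : Set.uIcc (0:ℝ) t ⊆ Set.Icc 0 T := by
      rw [Set.uIcc_of_le ht.1]; exact Set.Icc_subset_Icc le_rfl ht.2
    have hint1 : IntervalIntegrable g0 MeasureTheory.volume 0 t :=
      (hcg0.mono hsub1).intervalIntegrable
    have hint2 : IntervalIntegrable (fun u => 1/2*‖F u‖^2) MeasureTheory.volume 0 t :=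
      ((hhalfcont.mono hsub1)).intervalIntegrable
    have hint3 : IntervalIntegrable (fun u => 1/2*‖F u‖^2) MeasureTheory.volume 0 T := by
      apply ContinuousOn.intervalIntegrable
      rwa [Set.uIcc_of_le hT.le]
    have h3 : (∫ u in (0:ℝ)..t, g0 u) ≤ ∫ u in (0:ℝ)..t, 1/2*‖F u‖^2 := by
      apply intervalIntegral.integral_mono_on ht.1 hint1 hint2
      intro u hu
      simp only [hg0def]
      have he1 : Real.exp (-L*u) ≤ 1 := by
        rw [Real.exp_le_one_iff]
        nlinarith [hu.1, hL0]
      have : (0:ℝ) ≤ 1/2*‖F u‖^2 := by positivity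
      calc Real.exp (-L*u) * (1/2*‖F u‖^2) ≤ 1 * (1/2*‖F u‖^2) :=
            mul_le_mul_of_nonneg_right he1 this
        _ = 1/2*‖F u‖^2 := one_mul _
    have h4 : (∫ u in (0:ℝ)..t, 1/2*‖F u‖^2) ≤ ∫ u in (0:ℝ)..T, 1/2*‖F u‖^2 := by
      apply intervalIntegral.integral_mono_interval le_rfl ht.1 ht.2 _ hint3
      filter_upwards with u
      positivity
    have h5 : Real.exp (-L*t) * E t ≤ ∫ u in (0:ℝ)..T, 1/2*‖F u‖^2 := by linarith
    have h6 := mul_le_mul_of_nonneg_left h5 (Real.exp_nonneg (L*t))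
    have h7 : Real.exp (L*t) * (Real.exp (-L*t) * E t) = E t := by
      rw [← mul_assoc, ← Real.exp_add]
      have : L*t + -L*t = 0 := by ring
      rw [this, Real.exp_zero, one_mul]
    rw [h7] at h6
    have hIpos : (0:ℝ) ≤ ∫ u in (0:ℝ)..T, 1/2*‖F u‖^2 := by
      apply intervalIntegral.integral_nonneg hT.le
      intro u hu; positivity
    have h8 : Real.exp (L*t) ≤ Real.exp (L*T) :=
      Real.exp_le_exp.mpr (mul_le_mul_of_nonneg_left ht.2 hL0.le)
    calc E t ≤ Real.exp (L*t) * ∫ u in (0:ℝ)..T, 1/2*‖F u‖^2 := h6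
      _ ≤ Real.exp (L*T) * ∫ u in (0:ℝ)..T, 1/2*‖F u‖^2 :=
          mul_le_mul_of_nonneg_right h8 hIpos
  -- conclusion
  intro t ht
  have hQt := hQle t ht
  have hEt := hImain t ht
  have hp := hKpos (ξ' t)
  have hr := hKpos (ξ t)
  have ha : (0:ℝ) ≤ ‖ξ'' t‖^2 := by positivity
  have hm : (0:ℝ) ≤ ‖ξ' t‖^2 := by positivity
  have h1 : τ*‖ξ'' t‖^2 + (⟪K (ξ' t), ξ' t⟫ : ℝ) + ‖ξ' t‖^2
      ≤ (2+4/b)*(τ/2*‖ξ'' t‖^2 + b/4*⟪K (ξ' t), ξ' t⟫ + β*⟪K (ξ t), ξ t⟫ + 1/2*‖ξ' t‖^2) := by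
    have e : (2+4/b)*(τ/2*‖ξ'' t‖^2 + b/4*(⟪K (ξ' t), ξ' t⟫ : ℝ) + β*⟪K (ξ t), ξ t⟫ + 1/2*‖ξ' t‖^2)
        = τ*‖ξ'' t‖^2 + 2*(τ/b*‖ξ'' t‖^2) + (b/2+1)*(⟪K (ξ' t), ξ' t⟫ : ℝ)
          + 2*(β*(⟪K (ξ t), ξ t⟫ : ℝ))
          + 4*(β*(⟪K (ξ t), ξ t⟫ : ℝ)/b) + ‖ξ' t‖^2 + 2*(‖ξ' t‖^2/b) := by
      field_simp; ring
    rw [e]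
    have n1 : (0:ℝ) ≤ τ/b*‖ξ'' t‖^2 := by positivity
    have n2 : (0:ℝ) ≤ b*(⟪K (ξ' t), ξ' t⟫ : ℝ) := mul_nonneg hb.le hp
    have n3 : (0:ℝ) ≤ β*(⟪K (ξ t), ξ t⟫ : ℝ) := mul_nonneg hβ0.le hr
    have n4 : (0:ℝ) ≤ β*(⟪K (ξ t), ξ t⟫ : ℝ)/b := div_nonneg n3 hb.le
    have n5 : (0:ℝ) ≤ ‖ξ' t‖^2/b := div_nonneg hm hb.le
    linarith only [n1, n2, n3, n4, n5, hb]
  have h2 : (2+4/b)*(τ/2*‖ξ'' t‖^2 + b/4*⟪K (ξ' t), ξ' t⟫ + β*⟪K (ξ t), ξ t⟫ + 1/2*‖ξ' t‖^2)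
      ≤ (2+4/b) * E t := mul_le_mul_of_nonneg_left hQt (by positivity)
  have h3 : (2+4/b) * E t ≤ (2+4/b) * (Real.exp (L*T) * ∫ s in (0:ℝ)..T, 1/2*‖F s‖^2) :=
    mul_le_mul_of_nonneg_left hEt (by positivity)
  have h4 : (∫ s in (0:ℝ)..T, 1/2*‖F s‖^2) = 1/2 * ∫ s in (0:ℝ)..T, ‖F s‖^2 :=
    intervalIntegral.integral_const_mul _ _
  calc τ * ‖ξ'' t‖ ^ 2 + (⟪K (ξ' t), ξ' t⟫ : ℝ) + ‖ξ' t‖ ^ 2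
      ≤ (2+4/b) * E t := le_trans h1 h2
    _ ≤ (2+4/b) * (Real.exp (L*T) * ∫ s in (0:ℝ)..T, 1/2*‖F s‖^2) := h3
    _ = (2+4/b) * Real.exp (L*T) * (1/2) * ∫ s in (0:ℝ)..T, ‖F s‖^2 := by
        rw [h4]; ring
end

section
/- Uniform (in dimension and in τ) energy estimate for the Galerkin system under coercivity of the damping coefficient: for all real numbers δ > 0, c > 0, ᾱ > 0, τ̄ > 0, T > 0 there exists a constant C > 0, depending only on δ, c, ᾱ, τ̄, T (in particular independent of τ, n, K, M, and F), with the following property. For every τ ∈ (0, τ̄], with b := δ + τ c², every n ∈ ℕ, every symmetric positive semidefinite n×n real matrix K, every continuous M : [0,T] → ℝ^{n×n} satisfying the coercivity condition ⟨M(t) η, η⟩ ≥ ᾱ |η|² for all η ∈ ℝⁿ and t ∈ [0,T], every continuous F : [0,T] → ℝⁿ, and every three-times continuously differentiable solution ξ : [0,T] → ℝⁿ of the Galerkin system with ξ(0) = ξ'(0) = ξ''(0) = 0, one has for all t ∈ [0,T]: τ |ξ''(t)|² + ᾱ ∫₀ᵗ |ξ''(s)|² ds + ⟨K ξ'(t),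 ξ'(t)⟩ + |ξ'(t)|² ≤ C ∫₀ᵀ |F(s)|² ds. -/
/-!
Testing the system with `ξ''`, the coercivity `α₀ ‖ξ''‖² ≤ ⟪M ξ'', ξ''⟫` and Young's inequality
for the forcing show that the energy
`τ/2 ‖ξ''‖² + b/2 ⟪K ξ', ξ'⟫ + c² ⟪K ξ, ξ'⟫ + α₀/2 ∫ ‖ξ''‖²` grows at most by
`∫ ‖F‖² / (2α₀) + c² ∫ ⟪K ξ', ξ'⟫`, the last integral coming from `c² ⟪K ξ, ξ''⟫` after an
integration by parts. The indefinite cross term `c² ⟪K ξ, ξ'⟫` is absorbed by half of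
`b/2 ⟪K ξ', ξ'⟫` up to `c⁴/b ⟪K ξ, ξ⟫ ≤ c⁴ T/δ ∫ ⟪K ξ', ξ'⟫` (as `ξ 0 = 0` and `b ≥ δ`), which
leaves a linear integral inequality for `⟪K ξ', ξ'⟫` that Grönwall's lemma closes. The relaxation
time `τ` enters only through the nonnegative term `τ/2 ‖ξ''‖²` and through `b = δ + τ c² ≥ δ`, so
no constant depends on it.
-/

open scoped RealInnerProductSpace
open Set MeasureTheory

theorem sub_le_integral_of_hasDerivWithinAt_Icc {g g' φ : ℝ → ℝ} {a b : ℝ} (hab : a ≤ b)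
    (hg : ∀ x ∈ Icc a b, HasDerivWithinAt g (g' x) (Icc a b) x)
    (hφ : ContinuousOn φ (Icc a b)) (hle : ∀ x ∈ Icc a b, g' x ≤ φ x) :
    g b - g a ≤ ∫ x in a..b, φ x :=
  intervalIntegral.sub_le_integral_of_hasDeriv_right_of_le hab
    (fun x hx => (hg x hx).continuousWithinAt)
    (fun x hx =>
      ((hg x (Ioo_subset_Icc_self hx)).hasDerivAt (Icc_mem_nhds hx.1 hx.2)).hasDerivWithinAt)
    hφ.integrableOn_Icc fun x hx => hle x (Ioo_subset_Icc_self hx)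

theorem ContinuousOn.hasDerivWithinAt_integral_Icc {E : Type*} [NormedAddCommGroup E]
    [NormedSpace ℝ E] [CompleteSpace E] {f : ℝ → E} {a b t : ℝ}
    (hf : ContinuousOn f (Icc a b)) (ht : t ∈ Icc a b) :
    HasDerivWithinAt (fun x => ∫ s in a..x, f s) (f t) (Icc a b) t :=
  haveI : Fact (t ∈ Icc a b) := ⟨ht⟩
  intervalIntegral.integral_hasDerivWithinAt_right
    ((hf.mono (Icc_subset_Icc_right ht.2)).intervalIntegrable_of_Icc ht.1)
    (hf.stronglyMeasurableAtFilter_nhdsWithin measurableSet_Icc t) (hf t ht)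

theorem add_le_mul_exp_of_add_le_add_mul_integral {p y : ℝ → ℝ} {A B κ a b : ℝ}
    (hy : ContinuousOn y (Icc a b)) (hp : ∀ s ∈ Icc a b, 0 ≤ p s) (hκ : 0 < κ) (hB : 0 ≤ B)
    (hle : ∀ s ∈ Icc a b, p s + κ * y s ≤ A + B * ∫ r in a..s, y r) :
    ∀ s ∈ Icc a b, p s + κ * y s ≤ A * Real.exp (B / κ * (s - a)) := by
  set w := fun s => A + B * ∫ r in a..s, y r
  have hw : ∀ s ∈ Icc a b, HasDerivWithinAt w (B * y s) (Icc a b) s :=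
    fun s hs => ((hy.hasDerivWithinAt_integral_Icc hs).const_mul B).const_add A
  -- `w' = B y ≤ (B / κ) w` because `κ y ≤ w`
  have hw' : ∀ s ∈ Ico a b, B * y s ≤ B / κ * w s + 0 := fun s hs => by
    have := hle s (Ico_subset_Icc_self hs)
    rw [add_zero, div_mul_eq_mul_div, le_div_iff₀ hκ]
    nlinarith [hp s (Ico_subset_Icc_self hs)]
  have gron := le_gronwallBound_of_liminf_deriv_right_le (δ := A)
    (fun s hs => (hw s hs).continuousWithinAt)
    (fun s hs _ hr => ((hw s (Ico_subset_Icc_self hs)).mono_of_mem_nhdsWithin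
      (Icc_mem_nhdsGE_of_mem hs)).liminf_right_slope_le hr) (by simp [w]) hw'
  intro s hs
  rw [← gronwallBound_ε0]
  exact (hle s hs).trans (gron s hs)

section InnerProductSpace

variable {E : Type*} [NormedAddCommGroup E] [InnerProductSpace ℝ E]

theorem ContinuousLinearMap.IsPositive.two_mul_inner_le {K : E →L[ℝ] E} (hK : K.IsPositive)
    (r : ℝ) (x y : E) : 2 * r * ⟪K x, y⟫ ≤ r ^ 2 * ⟪K x, x⟫ + ⟪K y, y⟫ := by
  have h := hK.inner_nonneg_left (r • x - y)
  simp only [map_sub, map_smul, inner_sub_left, inner_sub_right, real_inner_smul_left,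
    real_inner_smul_right, hK.inner_left_eq_inner_right y x, real_inner_comm (K x) y] at h
  nlinarith [h]

theorem ContinuousLinearMap.IsPositive.inner_apply_self_le_mul_integral {K : E →L[ℝ] E}
    (hK : K.IsPositive) {f f' : ℝ → E} {a b t : ℝ}
    (hf : ∀ s ∈ Icc a b, HasDerivWithinAt f (f' s) (Icc a b) s)
    (hf' : ContinuousOn f' (Icc a b)) (ha : f a = 0) (ht : t ∈ Icc a b) :
    ⟪K (f t), f t⟫ ≤ (t - a) * ∫ s in a..t, ⟪K (f' s), f' s⟫ := by
  have hsub : Icc a t ⊆ Icc a b := Icc_subset_Icc_right ht.2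
  have hq : ContinuousOn (fun s => ⟪K (f' s), f' s⟫) (Icc a t) :=
    ((K.continuous.comp_continuousOn hf').inner hf').mono hsub
  -- Differentiate `s ↦ 2 (t - a) ⟪K (f s), f t⟫` and bound it by Cauchy–Schwarz for `K`.
  have key := sub_le_integral_of_hasDerivWithinAt_Icc ht.1
    (g := fun s => 2 * (t - a) * ⟪K (f s), f t⟫)
    (φ := fun s => (t - a) ^ 2 * ⟪K (f' s), f' s⟫ + ⟪K (f t), f t⟫)
    (fun s hs => (((K.hasFDerivAt.comp_hasDerivWithinAt s ((hf s (hsub hs)).mono hsub)).inner ℝ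
      (hasDerivWithinAt_const s _ (f t))).const_mul (2 * (t - a))))
    ((continuousOn_const.mul hq).add continuousOn_const)
    (fun s _ => by simpa using hK.two_mul_inner_le (t - a) (f' s) (f t))
  rw [intervalIntegral.integral_add ((hq.intervalIntegrable_of_Icc ht.1).const_mul _)
    intervalIntegrable_const, intervalIntegral.integral_const_mul,
    intervalIntegral.integral_const] at key
  simp only [ha, map_zero, inner_zero_left, mul_zero, sub_zero, smul_eq_mul] at key
  rcases ht.1.eq_or_lt with rfl | hat
  · simp [ha]
  · nlinarith [key]

noncomputable def galerkinEnergy (τ b c : ℝ) (K : E →L[ℝ] E) (x x' x'' : E) : ℝ :=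
  τ / 2 * ‖x''‖ ^ 2 + b / 2 * ⟪K x', x'⟫ + c ^ 2 * ⟪K x, x'⟫

theorem HasDerivWithinAt.galerkinEnergy {τ b c : ℝ} {K : E →L[ℝ] E} (hK : K.IsSymmetric)
    {ξ ξ' ξ'' : ℝ → E} {x' x'' x''' : E} {s : Set ℝ} {t : ℝ}
    (hξ : HasDerivWithinAt ξ x' s t) (hξ' : HasDerivWithinAt ξ' x'' s t)
    (hξ'' : HasDerivWithinAt ξ'' x''' s t) :
    HasDerivWithinAt (fun t => galerkinEnergy τ b c K (ξ t) (ξ' t) (ξ'' t))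
      (τ * ⟪x''', ξ'' t⟫ + b * ⟪K (ξ' t), x''⟫ + c ^ 2 * ⟪K (ξ t), x''⟫
        + c ^ 2 * ⟪K x', ξ' t⟫) s t := by
  have hKξ' := (K.hasFDerivAt.comp_hasDerivWithinAt t hξ').inner ℝ hξ'
  have hKξ := (K.hasFDerivAt.comp_hasDerivWithinAt t hξ).inner ℝ hξ'
  refine (((hξ''.norm_sq.const_mul (τ / 2)).add (hKξ'.const_mul (b / 2))).add
    (hKξ.const_mul (c ^ 2))).congr_deriv ?_
  have hsymm : ⟪K x'', ξ' t⟫ = ⟪K (ξ' t), x''⟫ := (hK x'' (ξ' t)).trans (real_inner_comm _ _)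
  simp only [Function.comp_apply, hsymm, real_inner_comm x''']
  ring

theorem galerkin_inner_second_deriv_le {τ b c α : ℝ} {K : E →L[ℝ] E} {x x' x'' x''' m f : E}
    (hα : 0 < α) (hm : α * ‖x''‖ ^ 2 ≤ ⟪m, x''⟫)
    (h : τ • x''' + m + b • K x' + c ^ 2 • K x = f) :
    τ * ⟪x''', x''⟫ + b * ⟪K x', x''⟫ + c ^ 2 * ⟪K x, x''⟫
      ≤ ‖f‖ ^ 2 / (2 * α) - α / 2 * ‖x''‖ ^ 2 := by
  have htest : τ * ⟪x''', x''⟫ + b * ⟪K x', x''⟫ + c ^ 2 * ⟪K x, x''⟫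
      = ⟪f, x''⟫ - ⟪m, x''⟫ := by
    simp only [← h, inner_add_left, real_inner_smul_left]
    ring
  have young : ⟪f, x''⟫ ≤ ‖f‖ ^ 2 / (2 * α) + α / 2 * ‖x''‖ ^ 2 := by
    rw [div_add' _ _ _ (by positivity), le_div_iff₀ (by positivity)]
    nlinarith [real_inner_le_norm f x'', sq_nonneg (‖f‖ - α * ‖x''‖)]
  linarith

theorem galerkinEnergy_sub_le {τ b c α T t : ℝ} {K : E →L[ℝ] E} {M : ℝ → E →L[ℝ] E}
    {F ξ ξ' ξ'' ξ''' : ℝ → E} (hK : K.IsSymmetric) (hα : 0 < α)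
    (hM : ∀ s ∈ Icc 0 T, ∀ η, α * ‖η‖ ^ 2 ≤ ⟪M s η, η⟫) (hF : ContinuousOn F (Icc 0 T))
    (hξ : ∀ s ∈ Icc 0 T, HasDerivWithinAt ξ (ξ' s) (Icc 0 T) s)
    (hξ' : ∀ s ∈ Icc 0 T, HasDerivWithinAt ξ' (ξ'' s) (Icc 0 T) s)
    (hξ'' : ∀ s ∈ Icc 0 T, HasDerivWithinAt ξ'' (ξ''' s) (Icc 0 T) s)
    (hODE : ∀ s ∈ Icc 0 T, τ • ξ''' s + M s (ξ'' s) + b • K (ξ' s) + c ^ 2 • K (ξ s) = F s)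
    (ht : t ∈ Icc 0 T) :
    galerkinEnergy τ b c K (ξ t) (ξ' t) (ξ'' t) - galerkinEnergy τ b c K (ξ 0) (ξ' 0) (ξ'' 0)
        + α / 2 * ∫ s in 0..t, ‖ξ'' s‖ ^ 2
      ≤ (∫ s in 0..t, ‖F s‖ ^ 2) / (2 * α) + c ^ 2 * ∫ s in 0..t, ⟪K (ξ' s), ξ' s⟫ := by
  have hsub : Icc 0 t ⊆ Icc 0 T := Icc_subset_Icc_right ht.2
  have hcξ' : ContinuousOn ξ' (Icc 0 t) :=
    fun s hs => (hξ' s (hsub hs)).continuousWithinAt.mono hsub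
  have hcξ'' : ContinuousOn ξ'' (Icc 0 t) :=
    fun s hs => (hξ'' s (hsub hs)).continuousWithinAt.mono hsub
  have hF2 : ContinuousOn (fun s => ‖F s‖ ^ 2) (Icc 0 t) := (hF.norm.pow 2).mono hsub
  have hξ''2 : ContinuousOn (fun s => ‖ξ'' s‖ ^ 2) (Icc 0 t) := hcξ''.norm.pow 2
  have hKξ' : ContinuousOn (fun s => ⟪K (ξ' s), ξ' s⟫) (Icc 0 t) :=
    (K.continuous.comp_continuousOn hcξ').inner hcξ'
  have key := sub_le_integral_of_hasDerivWithinAt_Icc ht.1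
    (g := fun s => galerkinEnergy τ b c K (ξ s) (ξ' s) (ξ'' s))
    (φ := fun s => ‖F s‖ ^ 2 / (2 * α) - α / 2 * ‖ξ'' s‖ ^ 2 + c ^ 2 * ⟪K (ξ' s), ξ' s⟫)
    (fun s hs => HasDerivWithinAt.galerkinEnergy hK ((hξ s (hsub hs)).mono hsub)
      ((hξ' s (hsub hs)).mono hsub) ((hξ'' s (hsub hs)).mono hsub))
    (((hF2.div_const _).sub (continuousOn_const.mul hξ''2)).add (continuousOn_const.mul hKξ'))
    (fun s hs => by
      have := galerkin_inner_second_deriv_le hα (hM s (hsub hs) (ξ'' s)) (hODE s (hsub hs))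
      linarith)
  have iF := (hF2.intervalIntegrable_of_Icc (μ := volume) ht.1).div_const (2 * α)
  have iξ'' := (hξ''2.intervalIntegrable_of_Icc (μ := volume) ht.1).const_mul (α / 2)
  have iKξ' := (hKξ'.intervalIntegrable_of_Icc (μ := volume) ht.1).const_mul (c ^ 2)
  rw [intervalIntegral.integral_add (iF.sub iξ'') iKξ', intervalIntegral.integral_sub iF iξ'',
    intervalIntegral.integral_div, intervalIntegral.integral_const_mul,
    intervalIntegral.integral_const_mul] at key
  linarith

theorem galerkin_energy_le_add_mul_integral {τ b c α δ T t : ℝ} {K : E →L[ℝ] E}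
    {M : ℝ → E →L[ℝ] E} {F ξ ξ' ξ'' ξ''' : ℝ → E} (hK : K.IsPositive) (hδ : 0 < δ) (hδb : δ ≤ b)
    (hα : 0 < α) (hM : ∀ s ∈ Icc 0 T, ∀ η, α * ‖η‖ ^ 2 ≤ ⟪M s η, η⟫)
    (hF : ContinuousOn F (Icc 0 T))
    (hξ : ∀ s ∈ Icc 0 T, HasDerivWithinAt ξ (ξ' s) (Icc 0 T) s)
    (hξ' : ∀ s ∈ Icc 0 T, HasDerivWithinAt ξ' (ξ'' s) (Icc 0 T) s)
    (hξ'' : ∀ s ∈ Icc 0 T, HasDerivWithinAt ξ'' (ξ''' s) (Icc 0 T) s)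
    (h0 : ξ 0 = 0) (h0' : ξ' 0 = 0) (h0'' : ξ'' 0 = 0)
    (hODE : ∀ s ∈ Icc 0 T, τ • ξ''' s + M s (ξ'' s) + b • K (ξ' s) + c ^ 2 • K (ξ s) = F s)
    (ht : t ∈ Icc 0 T) :
    τ / 2 * ‖ξ'' t‖ ^ 2 + α / 2 * (∫ s in 0..t, ‖ξ'' s‖ ^ 2) + δ / 4 * ⟪K (ξ' t), ξ' t⟫
      ≤ (∫ s in 0..T, ‖F s‖ ^ 2) / (2 * α)
        + (c ^ 2 + c ^ 4 * T / δ) * ∫ s in 0..t, ⟪K (ξ' s), ξ' s⟫ := by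
  have hb : 0 < b := hδ.trans_le hδb
  have energy := galerkinEnergy_sub_le hK.isSymmetric hα hM hF hξ hξ' hξ'' hODE ht
  have hE0 : galerkinEnergy τ b c K (ξ 0) (ξ' 0) (ξ'' 0) = 0 := by
    simp [galerkinEnergy, h0, h0', h0'']
  rw [hE0, sub_zero, galerkinEnergy] at energy
  have hFt : ∫ s in 0..t, ‖F s‖ ^ 2 ≤ ∫ s in 0..T, ‖F s‖ ^ 2 :=
    intervalIntegral.integral_mono_interval le_rfl ht.1 ht.2
      (Filter.Eventually.of_forall fun s => by positivity)
      ((hF.norm.pow 2).intervalIntegrable_of_Icc (ht.1.trans ht.2))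
  have hu : 0 ≤ ∫ s in 0..t, ⟪K (ξ' s), ξ' s⟫ :=
    intervalIntegral.integral_nonneg ht.1 fun s _ => hK.inner_nonneg_left _
  have hξt : ⟪K (ξ t), ξ t⟫ ≤ T * ∫ s in 0..t, ⟪K (ξ' s), ξ' s⟫ := by
    have := hK.inner_apply_self_le_mul_integral hξ
      (fun s hs => (hξ' s hs).continuousWithinAt) h0 ht
    rw [sub_zero] at this
    exact this.trans (mul_le_mul_of_nonneg_right ht.2 hu)
  -- The cross term `c² ⟪K ξ, ξ'⟫` is absorbed by half of the `b/2 ⟪K ξ', ξ'⟫` term.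
  have hcross : -(c ^ 2 * ⟪K (ξ t), ξ' t⟫)
      ≤ c ^ 4 / b * ⟪K (ξ t), ξ t⟫ + b / 4 * ⟪K (ξ' t), ξ' t⟫ := by
    calc -(c ^ 2 * ⟪K (ξ t), ξ' t⟫) = b / 4 * (2 * -(2 * c ^ 2 / b) * ⟪K (ξ t), ξ' t⟫) := by
          field_simp; ring
      _ ≤ b / 4 * ((-(2 * c ^ 2 / b)) ^ 2 * ⟪K (ξ t), ξ t⟫ + ⟪K (ξ' t), ξ' t⟫) :=
          mul_le_mul_of_nonneg_left (hK.two_mul_inner_le _ _ _) (by positivity)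
      _ = c ^ 4 / b * ⟪K (ξ t), ξ t⟫ + b / 4 * ⟪K (ξ' t), ξ' t⟫ := by
          field_simp; ring
  have hcb : c ^ 4 / b * ⟪K (ξ t), ξ t⟫ ≤ c ^ 4 / δ * (T * ∫ s in 0..t, ⟪K (ξ' s), ξ' s⟫) := by
    gcongr
    exact hK.inner_nonneg_left _
  have hδy : δ / 4 * ⟪K (ξ' t), ξ' t⟫ ≤ b / 4 * ⟪K (ξ' t), ξ' t⟫ := by
    gcongr
    exact hK.inner_nonneg_left _
  have hFα : (∫ s in 0..t, ‖F s‖ ^ 2) / (2 * α) ≤ (∫ s in 0..T, ‖F s‖ ^ 2) / (2 * α) := by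
    gcongr
  have hexp : (c ^ 2 + c ^ 4 * T / δ) * ∫ s in 0..t, ⟪K (ξ' s), ξ' s⟫
      = c ^ 2 * (∫ s in 0..t, ⟪K (ξ' s), ξ' s⟫)
        + c ^ 4 / δ * (T * ∫ s in 0..t, ⟪K (ξ' s), ξ' s⟫) := by
    ring
  linarith

-- The Grönwall factor for the rate `(c² + c⁴ T/δ) / (δ/4)`, times the weights that recover
-- `τ ‖ξ''‖² + α ∫ ‖ξ''‖²`, `⟪K ξ', ξ'⟫` and `‖ξ'‖² ≤ T ∫ ‖ξ''‖²` from the energy bound.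
noncomputable def galerkinConstant (δ c α T : ℝ) : ℝ :=
  Real.exp ((c ^ 2 + c ^ 4 * T / δ) / (δ / 4) * T) * (2 + 4 / δ + 2 * T / α) / (2 * α)

theorem galerkin_energy_estimate {τ b c α δ T t : ℝ} {K : E →L[ℝ] E} {M : ℝ → E →L[ℝ] E}
    {F ξ ξ' ξ'' ξ''' : ℝ → E}
    (hK : K.IsPositive) (hτ : 0 ≤ τ) (hδ : 0 < δ) (hδb : δ ≤ b) (hα : 0 < α)
    (hM : ∀ s ∈ Icc 0 T, ∀ η, α * ‖η‖ ^ 2 ≤ ⟪M s η, η⟫) (hF : ContinuousOn F (Icc 0 T))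
    (hξ : ∀ s ∈ Icc 0 T, HasDerivWithinAt ξ (ξ' s) (Icc 0 T) s)
    (hξ' : ∀ s ∈ Icc 0 T, HasDerivWithinAt ξ' (ξ'' s) (Icc 0 T) s)
    (hξ'' : ∀ s ∈ Icc 0 T, HasDerivWithinAt ξ'' (ξ''' s) (Icc 0 T) s)
    (h0 : ξ 0 = 0) (h0' : ξ' 0 = 0) (h0'' : ξ'' 0 = 0)
    (hODE : ∀ s ∈ Icc 0 T, τ • ξ''' s + M s (ξ'' s) + b • K (ξ' s) + c ^ 2 • K (ξ s) = F s)
    (ht : t ∈ Icc 0 T) :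
    τ * ‖ξ'' t‖ ^ 2 + α * (∫ s in 0..t, ‖ξ'' s‖ ^ 2) + ⟪K (ξ' t), ξ' t⟫ + ‖ξ' t‖ ^ 2
      ≤ galerkinConstant δ c α T * ∫ s in 0..T, ‖F s‖ ^ 2 := by
  have hT : 0 ≤ T := ht.1.trans ht.2
  have hcξ' : ContinuousOn ξ' (Icc 0 T) := fun s hs => (hξ' s hs).continuousWithinAt
  have hcξ'' : ContinuousOn ξ'' (Icc 0 T) := fun s hs => (hξ'' s hs).continuousWithinAt
  have hI : ∀ s ∈ Icc 0 T, 0 ≤ ∫ r in 0..s, ‖ξ'' r‖ ^ 2 := fun s hs =>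
    intervalIntegral.integral_nonneg hs.1 fun _ _ => by positivity
  set A := (∫ s in 0..T, ‖F s‖ ^ 2) / (2 * α)
  set e := Real.exp ((c ^ 2 + c ^ 4 * T / δ) / (δ / 4) * T)
  have hA : 0 ≤ A := div_nonneg
    (intervalIntegral.integral_nonneg hT fun _ _ => by positivity) (by positivity)
  have hΦ : τ / 2 * ‖ξ'' t‖ ^ 2 + α / 2 * (∫ s in 0..t, ‖ξ'' s‖ ^ 2)
      + δ / 4 * ⟪K (ξ' t), ξ' t⟫ ≤ A * e := by
    refine (add_le_mul_exp_of_add_le_add_mul_integral (p := fun s =>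
      τ / 2 * ‖ξ'' s‖ ^ 2 + α / 2 * ∫ r in 0..s, ‖ξ'' r‖ ^ 2)
      ((K.continuous.comp_continuousOn hcξ').inner hcξ')
      (fun s hs => add_nonneg (by positivity) (mul_nonneg (by positivity) (hI s hs)))
      (by positivity) (by positivity) (fun s hs => galerkin_energy_le_add_mul_integral hK hδ hδb
        hα hM hF hξ hξ' hξ'' h0 h0' h0'' hODE hs) t ht).trans ?_
    gcongr
    exact Real.exp_le_exp.2 (by gcongr; linarith [ht.2])
  have hξ't : ‖ξ' t‖ ^ 2 ≤ T * ∫ s in 0..t, ‖ξ'' s‖ ^ 2 := by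
    have := ContinuousLinearMap.isPositive_id.inner_apply_self_le_mul_integral hξ' hcξ'' h0' ht
    simp only [ContinuousLinearMap.id_apply, real_inner_self_eq_norm_sq, sub_zero] at this
    exact this.trans (mul_le_mul_of_nonneg_right ht.2 (hI t ht))
  have hKξ' := hK.inner_nonneg_left (ξ' t)
  have hy : ⟪K (ξ' t), ξ' t⟫ ≤ 4 / δ * (A * e) := by
    rw [div_mul_eq_mul_div, le_div_iff₀ hδ]
    nlinarith [hI t ht]
  have hTI : T * ∫ s in 0..t, ‖ξ'' s‖ ^ 2 ≤ 2 * T / α * (A * e) := by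
    have hαI : α * ∫ s in 0..t, ‖ξ'' s‖ ^ 2 ≤ 2 * (A * e) := by nlinarith
    rw [div_mul_eq_mul_div, le_div_iff₀ hα]
    nlinarith [mul_le_mul_of_nonneg_left hαI hT]
  have hC : galerkinConstant δ c α T * ∫ s in 0..T, ‖F s‖ ^ 2
      = 2 * (A * e) + 4 / δ * (A * e) + 2 * T / α * (A * e) := by
    simp only [galerkinConstant, A, e]
    field_simp
  rw [hC]
  nlinarith

end InnerProductSpace

theorem galerkin_energy_estimate_tau_independent_general
    (δ c α₀ τmax T : ℝ) (hδ : 0 < δ) (hα : 0 < α₀) (hT : 0 < T) :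
    ∃ C : ℝ, 0 < C ∧
      ∀ τ ∈ Set.Ioc (0:ℝ) τmax,
        ∀ (n : ℕ)
          (K : EuclideanSpace ℝ (Fin n) →L[ℝ] EuclideanSpace ℝ (Fin n)),
          (∀ x y : EuclideanSpace ℝ (Fin n), ⟪K x, y⟫ = ⟪x, K y⟫) →
          (∀ x : EuclideanSpace ℝ (Fin n), 0 ≤ ⟪K x, x⟫) →
          ∀ (M : ℝ → (EuclideanSpace ℝ (Fin n) →L[ℝ] EuclideanSpace ℝ (Fin n))),
          ContinuousOn M (Set.Icc 0 T) →
          (∀ t ∈ Set.Icc (0:ℝ) T, ∀ η : EuclideanSpace ℝ (Fin n),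
            α₀ * ‖η‖ ^ 2 ≤ ⟪M t η, η⟫) →
          ∀ (F : ℝ → EuclideanSpace ℝ (Fin n)),
          ContinuousOn F (Set.Icc 0 T) →
          ∀ (ξ ξ' ξ'' ξ''' : ℝ → EuclideanSpace ℝ (Fin n)),
          (∀ t ∈ Set.Icc 0 T, HasDerivWithinAt ξ (ξ' t) (Set.Icc 0 T) t) →
          (∀ t ∈ Set.Icc 0 T, HasDerivWithinAt ξ' (ξ'' t) (Set.Icc 0 T) t) →
          (∀ t ∈ Set.Icc 0 T, HasDerivWithinAt ξ'' (ξ''' t) (Set.Icc 0 T) t) →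
          ContinuousOn ξ''' (Set.Icc 0 T) →
          ξ 0 = 0 → ξ' 0 = 0 → ξ'' 0 = 0 →
          (∀ t ∈ Set.Icc 0 T,
            τ • ξ''' t + M t (ξ'' t) + (δ + τ * c ^ 2) • K (ξ' t)
              + c ^ 2 • K (ξ t) = F t) →
          ∀ t ∈ Set.Icc (0:ℝ) T,
            τ * ‖ξ'' t‖ ^ 2 + α₀ * (∫ s in (0:ℝ)..t, ‖ξ'' s‖ ^ 2)
              + ⟪K (ξ' t), ξ' t⟫ + ‖ξ' t‖ ^ 2
              ≤ C * ∫ s in (0:ℝ)..T, ‖F s‖ ^ 2 := by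
  refine ⟨galerkinConstant δ c α₀ T, by unfold galerkinConstant; positivity, ?_⟩
  rintro τ ⟨hτ, -⟩ n K hKsym hKpos M - hM F hF ξ ξ' ξ'' ξ''' hξ hξ' hξ'' - h0 h0' h0'' hODE t ht
  exact galerkin_energy_estimate ((K.isPositive_iff).2 ⟨hKsym, hKpos⟩) hτ.le hδ
    (le_add_of_nonneg_right (by positivity)) hα hM hF hξ hξ' hξ'' h0 h0' h0'' hODE ht

/-- Uniform (in dimension and in τ) energy estimate for the Galerkin system
under coercivity of the damping coefficient: for all `δ, c, α₀, τmax, T > 0`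
there is `C > 0`, independent of `τ, n, K, M, F`, such that for every
`τ ∈ (0, τmax]`, with `b = δ + τ c²`, every C³ solution `ξ` of
`τ ξ''' + M(t) ξ'' + b K ξ' + c² K ξ = F(t)` with zero initial data, `K`
symmetric positive semidefinite and `⟨M(t)η, η⟩ ≥ α₀|η|²`, satisfies
`τ|ξ''(t)|² + α₀∫₀ᵗ|ξ''|² + ⟨K ξ'(t), ξ'(t)⟩ + |ξ'(t)|² ≤ C ∫₀ᵀ |F|²`. -/
theorem galerkin_energy_estimate_tau_independent
    (δ c α₀ τmax T : ℝ) (hδ : 0 < δ) (hc : 0 < c) (hα : 0 < α₀)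
    (hτmax : 0 < τmax) (hT : 0 < T) :
    ∃ C : ℝ, 0 < C ∧
      ∀ τ ∈ Set.Ioc (0:ℝ) τmax,
        ∀ (n : ℕ)
          (K : EuclideanSpace ℝ (Fin n) →L[ℝ] EuclideanSpace ℝ (Fin n)),
          (∀ x y : EuclideanSpace ℝ (Fin n), ⟪K x, y⟫ = ⟪x, K y⟫) →
          (∀ x : EuclideanSpace ℝ (Fin n), 0 ≤ ⟪K x, x⟫) →
          ∀ (M : ℝ → (EuclideanSpace ℝ (Fin n) →L[ℝ] EuclideanSpace ℝ (Fin n))),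
          ContinuousOn M (Set.Icc 0 T) →
          (∀ t ∈ Set.Icc (0:ℝ) T, ∀ η : EuclideanSpace ℝ (Fin n),
            α₀ * ‖η‖ ^ 2 ≤ ⟪M t η, η⟫) →
          ∀ (F : ℝ → EuclideanSpace ℝ (Fin n)),
          ContinuousOn F (Set.Icc 0 T) →
          ∀ (ξ ξ' ξ'' ξ''' : ℝ → EuclideanSpace ℝ (Fin n)),
          (∀ t ∈ Set.Icc 0 T, HasDerivWithinAt ξ (ξ' t) (Set.Icc 0 T) t) →
          (∀ t ∈ Set.Icc 0 T, HasDerivWithinAt ξ' (ξ'' t) (Set.Icc 0 T) t) →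
          (∀ t ∈ Set.Icc 0 T, HasDerivWithinAt ξ'' (ξ''' t) (Set.Icc 0 T) t) →
          ContinuousOn ξ''' (Set.Icc 0 T) →
          ξ 0 = 0 → ξ' 0 = 0 → ξ'' 0 = 0 →
          (∀ t ∈ Set.Icc 0 T,
            τ • ξ''' t + M t (ξ'' t) + (δ + τ * c ^ 2) • K (ξ' t)
              + c ^ 2 • K (ξ t) = F t) →
          ∀ t ∈ Set.Icc (0:ℝ) T,
            τ * ‖ξ'' t‖ ^ 2 + α₀ * (∫ s in (0:ℝ)..t, ‖ξ'' s‖ ^ 2)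
              + ⟪K (ξ' t), ξ' t⟫ + ‖ξ' t‖ ^ 2
              ≤ C * ∫ s in (0:ℝ)..T, ‖F s‖ ^ 2 :=
  galerkin_energy_estimate_tau_independent_general δ c α₀ τmax T hδ hα hT
end
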